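/- Let α > 1/4 be real. Then ∫₀^∞ (1 + s) / ((1 + s²)(α s² + s + 1)) ds = (1/(√(4α−1)·(α² − 2α + 2))) · ( π·(α² − (α/2)(√(4α−1) + 3) + √(4α−1)) + (α/2)·√(4α−1)·ln(α) − α·(2α − 3)·arccot(√(4α−1)) ), where arccot(t) = π/2 − arctan(t). -/

import Mathlib

/-!
Partial fractions split the integrand into `α / (2Δ) · (Q'/Q - 2s/(1+s²))`,
`(2 - α)/Δ · 1/(1+s²)` and `α(2α-3)/(2Δ) · 1/Q`, where `Q s = α s² + s + 1` and
`Δ = α² - 2α + 2`. Since `4α - 1 > 0`, `Q` has no real root and `1/Q` integrates to an arctangent,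
so the integrand has an explicit antiderivative; the integral is its limit at `∞` minus its value
at `0`, and `arctan (1/r) = π/2 - arctan r` turns the latter into the `arccot` term.
-/

open MeasureTheory Real Filter Topology

lemma quadratic_pos_of_discrim_neg {a b c : ℝ} (ha : 0 < a) (hd : b ^ 2 < 4 * a * c) (s : ℝ) :
    0 < a * s ^ 2 + b * s + c := by
  nlinarith [sq_nonneg (2 * a * s + b)]

lemma hasDerivAt_arctan_completedSquare {a b c r : ℝ} (hr : r ≠ 0)
    (hrsq : r ^ 2 = 4 * a * c - b ^ 2) (s : ℝ) :
    HasDerivAt (fun s => arctan ((2 * a * s + b) / r)) (r / (2 * (a * s ^ 2 + b * s + c))) s := by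
  -- `r² + (2as + b)² = 4a · (as² + bs + c)`
  have hsq : 1 + ((2 * a * s + b) / r) ^ 2 = 4 * a * (a * s ^ 2 + b * s + c) / r ^ 2 := by
    field_simp
    linear_combination hrsq
  have hpos : 0 < 4 * a * (a * s ^ 2 + b * s + c) := by
    have : 0 < r ^ 2 + (2 * a * s + b) ^ 2 := by positivity
    linear_combination this + hrsq
  obtain ⟨h4a, hQ⟩ := mul_ne_zero_iff.1 hpos.ne'
  have ha : a ≠ 0 := right_ne_zero_of_mul h4a
  have hlin : HasDerivAt (fun s => (2 * a * s + b) / r) (2 * a / r) s := by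
    simpa using (((hasDerivAt_id s).const_mul (2 * a)).add_const b).div_const r
  refine ((hasDerivAt_arctan _).comp s hlin).congr_deriv ?_
  rw [hsq]
  field_simp
  ring

lemma tendsto_quadratic_div_one_add_sq_atTop (a b c : ℝ) :
    Tendsto (fun s => (a * s ^ 2 + b * s + c) / (1 + s ^ 2)) atTop (𝓝 a) := by
  have hinv : Tendsto (fun s : ℝ => s⁻¹) atTop (𝓝 0) := tendsto_inv_atTop_zero
  have hlim : Tendsto (fun s : ℝ => (a + b * s⁻¹ + c * (s⁻¹) ^ 2) / ((s⁻¹) ^ 2 + 1)) atTop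
      (𝓝 ((a + b * 0 + c * 0 ^ 2) / (0 ^ 2 + 1))) :=
    (((tendsto_const_nhds.add (hinv.const_mul b)).add ((hinv.pow 2).const_mul c)).div
      ((hinv.pow 2).add tendsto_const_nhds) (by norm_num))
  simp only [mul_zero, add_zero, zero_pow two_ne_zero, zero_add, div_one] at hlim
  refine hlim.congr' ?_
  filter_upwards [eventually_ne_atTop 0] with s hs
  field_simp

section AppendixF

variable {α : ℝ}

noncomputable def appendixFAntideriv (α s : ℝ) : ℝ :=
  α / (2 * (α ^ 2 - 2 * α + 2)) * log ((α * s ^ 2 + s + 1) / (1 + s ^ 2)) +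
    (2 - α) / (α ^ 2 - 2 * α + 2) * arctan s +
    α * (2 * α - 3) / ((α ^ 2 - 2 * α + 2) * √(4 * α - 1)) *
      arctan ((2 * α * s + 1) / √(4 * α - 1))

lemma appendixF_quadratic_pos (hα : 1 / 4 < α) (s : ℝ) : 0 < α * s ^ 2 + s + 1 := by
  simpa using quadratic_pos_of_discrim_neg (b := 1) (c := 1) (by linarith) (by linarith) s

lemma appendixF_integrand_nonneg (hα : 1 / 4 < α) {s : ℝ} (hs : 0 ≤ s) :
    0 ≤ (1 + s) / ((1 + s ^ 2) * (α * s ^ 2 + s + 1)) := by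
  have := appendixF_quadratic_pos hα s
  positivity

lemma appendixF_partialFractions (hα : 1 / 4 < α) (s : ℝ) :
    (1 + s) / ((1 + s ^ 2) * (α * s ^ 2 + s + 1)) =
      α / (2 * (α ^ 2 - 2 * α + 2)) *
          ((2 * α * s + 1) / (α * s ^ 2 + s + 1) - 2 * s / (1 + s ^ 2)) +
        (2 - α) / (α ^ 2 - 2 * α + 2) * (1 / (1 + s ^ 2)) +
        α * (2 * α - 3) / (2 * (α ^ 2 - 2 * α + 2)) * (1 / (α * s ^ 2 + s + 1)) := by
  have hQ := (appendixF_quadratic_pos hα s).ne'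
  have hΔ : α ^ 2 - 2 * α + 2 ≠ 0 := by nlinarith [sq_nonneg (α - 1)]
  have hs : 1 + s ^ 2 ≠ 0 := by positivity
  -- `field_simp` would rewrite `Q` and `Δ` into a form no longer matching `hQ`, `hΔ`
  generalize hQdef : α * s ^ 2 + s + 1 = Q at *
  generalize hΔdef : α ^ 2 - 2 * α + 2 = Δ at *
  field_simp
  subst hQdef hΔdef
  ring

lemma hasDerivAt_appendixFAntideriv (hα : 1 / 4 < α) (s : ℝ) :
    HasDerivAt (appendixFAntideriv α) ((1 + s) / ((1 + s ^ 2) * (α * s ^ 2 + s + 1))) s := by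
  have hr : √(4 * α - 1) ≠ 0 := (sqrt_pos.2 (by linarith)).ne'
  have hQ := (appendixF_quadratic_pos hα s).ne'
  have hs : 1 + s ^ 2 ≠ 0 := by positivity
  have hQ' : HasDerivAt (fun s => α * s ^ 2 + s + 1) (2 * α * s + 1) s :=
    ((((hasDerivAt_pow 2 s).const_mul α).add (hasDerivAt_id s)).add_const 1).congr_deriv
      (by simp; ring)
  have hsq : HasDerivAt (fun s => 1 + s ^ 2) (2 * s) s := by
    simpa using (hasDerivAt_pow 2 s).const_add 1
  have hlog : HasDerivAt (fun s => log ((α * s ^ 2 + s + 1) / (1 + s ^ 2)))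
      (((2 * α * s + 1) * (1 + s ^ 2) - (α * s ^ 2 + s + 1) * (2 * s)) / (1 + s ^ 2) ^ 2 /
        ((α * s ^ 2 + s + 1) / (1 + s ^ 2))) s :=
    (hQ'.div hsq hs).log (div_ne_zero hQ hs)
  have harctan := hasDerivAt_arctan_completedSquare (a := α) (b := 1) (c := 1) hr
    (by rw [sq_sqrt (by linarith)]; ring) s
  simp only [one_mul] at harctan
  refine (((hlog.const_mul _).add ((hasDerivAt_arctan s).const_mul _)).add
    (harctan.const_mul _)).congr_deriv ?_
  rw [appendixF_partialFractions hα s]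
  generalize α * s ^ 2 + s + 1 = Q at *
  generalize α ^ 2 - 2 * α + 2 = Δ at *
  generalize √(4 * α - 1) = r at *
  field_simp

lemma tendsto_appendixFAntideriv_atTop (hα : 1 / 4 < α) :
    Tendsto (appendixFAntideriv α) atTop
      (𝓝 (α / (2 * (α ^ 2 - 2 * α + 2)) * log α + (2 - α) / (α ^ 2 - 2 * α + 2) * (π / 2) +
        α * (2 * α - 3) / ((α ^ 2 - 2 * α + 2) * √(4 * α - 1)) * (π / 2))) := by
  have hr : 0 < √(4 * α - 1) := sqrt_pos.2 (by linarith)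
  have harctan : Tendsto arctan atTop (𝓝 (π / 2)) :=
    tendsto_arctan_atTop.mono_right nhdsWithin_le_nhds
  have hlog : Tendsto (fun s => log ((α * s ^ 2 + s + 1) / (1 + s ^ 2))) atTop (𝓝 (log α)) :=
    (continuousAt_log (by linarith)).tendsto.comp
      (by simpa using tendsto_quadratic_div_one_add_sq_atTop α 1 1)
  have hlin : Tendsto (fun s => (2 * α * s + 1) / √(4 * α - 1)) atTop atTop :=
    (tendsto_atTop_add_const_right _ 1
      (tendsto_id.const_mul_atTop (by linarith))).atTop_div_const hr
  exact ((hlog.const_mul _).add (harctan.const_mul _)).add ((harctan.comp hlin).const_mul _)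

lemma appendixFAntideriv_zero (hα : 1 / 4 < α) :
    appendixFAntideriv α 0 =
      α * (2 * α - 3) / ((α ^ 2 - 2 * α + 2) * √(4 * α - 1)) * (π / 2 - arctan √(4 * α - 1)) := by
  rw [← arctan_inv_of_pos (sqrt_pos.2 (by linarith))]
  simp [appendixFAntideriv]

end AppendixF

theorem appendixF_integral (α : ℝ) (hα : 1 / 4 < α) :
    ∫ s in Set.Ioi (0 : ℝ), (1 + s) / ((1 + s ^ 2) * (α * s ^ 2 + s + 1)) =
      (1 / (Real.sqrt (4 * α - 1) * (α ^ 2 - 2 * α + 2))) *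
        (π * (α ^ 2 - (α / 2) * (Real.sqrt (4 * α - 1) + 3) + Real.sqrt (4 * α - 1)) +
          (α / 2) * Real.sqrt (4 * α - 1) * Real.log α -
          α * (2 * α - 3) * (π / 2 - Real.arctan (Real.sqrt (4 * α - 1)))) := by
  rw [integral_Ioi_of_hasDerivAt_of_nonneg' (fun s _ => hasDerivAt_appendixFAntideriv hα s)
    (fun s hs => appendixF_integrand_nonneg hα (hs.le))
    (tendsto_appendixFAntideriv_atTop hα), appendixFAntideriv_zero hα]
  have hr : √(4 * α - 1) ≠ 0 := (sqrt_pos.2 (by linarith)).ne'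
  have hΔ : α ^ 2 - 2 * α + 2 ≠ 0 := by nlinarith [sq_nonneg (α - 1)]
  generalize α ^ 2 - 2 * α + 2 = Δ at *
  generalize √(4 * α - 1) = r at *
  field_simp
  ring
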